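/- For the graded Hecke algebra relation: in an associative algebra generated by a commutative polynomial part Sym(X⊗ℂ)[r] and a group algebra ℂ[W] of a Weyl group subject to t_α·θ − (s_α θ)·t_α = 2r⟨α^∨, θ⟩ for simple roots α and θ ∈ X, the map ζ defined by ζ(r) = r, ζ(t_w) = (−1)^{ℓ(w)} t_{w₀ww₀}, ζ(θ) = w₀·θ (for θ ∈ X) preserves these defining relations, hence extends to an algebra involution. -/
import Mathlib


/-- **The Zelevinsky map preserves the graded Hecke algebra relations.**
Let `X` be the (complexified) weight space of a based root datum with Weyl group `W`
acting by `act`, with simple roots `Pi'`, simple reflections `s α`, coroot pairings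
`coroot α`, and longest element `w₀` (so `w₀² = 1`, `w₀` maps each simple root `α` to
the negative of a simple root `β` with `s β = w₀ (s α) w₀` and
`⟨β^∨, w₀θ⟩ = −⟨α^∨, θ⟩`).  Suppose an associative `ℂ`-algebra `A` contains the
images `i θ` of `θ ∈ X`, elements `t w` for `w ∈ W`, and a central element `r`,
subject to the cross relations `t_{s α}·i θ − i(s_α θ)·t_{s α} = 2⟨α^∨,θ⟩ r`.
Then the images under `ζ` — `ζ(r) = r`, `ζ(t_{s α}) = −t_{w₀ (s α) w₀}`,
`ζ(θ) = w₀·θ` — again satisfy these defining relations, so `ζ` extends to an algebra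
involution. -/
theorem zeta_preserves_graded_hecke_relations
    {X : Type*} [AddCommGroup X] [Module ℂ X] {W : Type*} [Group W]
    (act : W → X →ₗ[ℂ] X) (hact : ∀ (w w' : W) (x : X), act (w * w') x = act w (act w' x))
    (Pi' : Set X) (s : X → W) (coroot : X → (X →ₗ[ℂ] ℂ)) (w₀ : W)
    (hw₀sq : w₀ * w₀ = 1)
    (hw₀ : ∀ α ∈ Pi', ∃ β ∈ Pi', act w₀ α = -β ∧ s β = w₀ * s α * w₀ ∧
      ∀ θ : X, coroot β (act w₀ θ) = -coroot α θ)
    {A : Type*} [Ring A] [Algebra ℂ A]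
    (i : X →ₗ[ℂ] A) (t : W → A) (r : A)
    (hrel : ∀ α ∈ Pi', ∀ θ : X,
      t (s α) * i θ - i (act (s α) θ) * t (s α) = (2 * coroot α θ) • r) :
    ∀ α ∈ Pi', ∀ θ : X,
      (-(t (w₀ * s α * w₀))) * i (act w₀ θ) -
          i (act w₀ (act (s α) θ)) * (-(t (w₀ * s α * w₀))) =
        (2 * coroot α θ) • r := by
  intro α hα θ
  obtain ⟨β, hβ, hneg, hsβ, hpair⟩ := hw₀ α hα
  have key := hrel β hβ (act w₀ θ)
  have h1 : act (s β) (act w₀ θ) = act w₀ (act (s α) θ) := by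
    rw [← hact, hsβ, mul_assoc, mul_assoc, hw₀sq, mul_one, hact]
  rw [h1, hpair] at key
  rw [← hsβ]
  have : -(t (s β) * i (act w₀ θ) - i (act w₀ (act (s α) θ)) * t (s β)) =
      -((2 * -coroot α θ) • r) := by rw [key]
  rw [neg_sub] at this
  calc -t (s β) * i (act w₀ θ) - i (act w₀ (act (s α) θ)) * -t (s β)
      = -(t (s β) * i (act w₀ θ) - i (act w₀ (act (s α) θ)) * t (s β)) := by noncomm_ring
    _ = (2 * coroot α θ) • r := by
        rw [key, show (2 : ℂ) * -coroot α θ = -(2 * coroot α θ) by ring, neg_smul, neg_neg]
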